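/- Let p, q ∈ ℝ² with x_p < x_q. Then for every y ∈ ℝ, δ'_{pq}(y) = max{ |y_p − y|, |y_q − y| } (equivalently, δ'_{pq}(y) = max{ δ_{pp}(y), δ_{qq}(y) }). -/

import Mathlib

open Metric Set

noncomputable section

/-- Points of the Euclidean plane ℝ². -/
abbrev Pt : Type := EuclideanSpace ℝ (Fin 2)

/-- The point (x, y) ∈ ℝ². -/
def pt (x y : ℝ) : Pt := (WithLp.equiv 2 (Fin 2 → ℝ)).symm ![x, y]

/-- The leftward horizontal halfline ←p = {(x, y_p) : x ≤ x_p}. -/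
def leftRay (p : Pt) : Set Pt := {z : Pt | z 1 = p 1 ∧ z 0 ≤ p 0}

/-- The rightward horizontal halfline →p = {(x, y_p) : x ≥ x_p}. -/
def rightRay (p : Pt) : Set Pt := {z : Pt | z 1 = p 1 ∧ p 0 ≤ z 0}

/-- h_{←p}(q): Euclidean distance from q to the leftward halfline at p. -/
def hL (p q : Pt) : ℝ := infDist q (leftRay p)

/-- h_{→p}(q): Euclidean distance from q to the rightward halfline at p. -/
def hR (p q : Pt) : ℝ := infDist q (rightRay p)

/-- h_{←S}(q) = max_{p ∈ S} h_{←p}(q). -/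
def hLS (S : Finset Pt) (hS : S.Nonempty) (q : Pt) : ℝ := S.sup' hS fun p => hL p q

/-- h_{→S}(q) = max_{p ∈ S} h_{→p}(q). -/
def hRS (S : Finset Pt) (hS : S.Nonempty) (q : Pt) : ℝ := S.sup' hS fun p => hR p q

/-- δ_{pq}(y) = inf_x max{‖(x,y) − p‖, ‖(x,y) − q‖}. -/
def delta (p q : Pt) (y : ℝ) : ℝ := ⨅ x : ℝ, max ‖pt x y - p‖ ‖pt x y - q‖

/-- δ'_{pq}(y) = inf_x max{h_{←q}((x,y)), h_{→p}((x,y))}. -/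
def delta' (p q : Pt) (y : ℝ) : ℝ := ⨅ x : ℝ, max (hL q (pt x y)) (hR p (pt x y))

/-! Every point of a horizontal halfline has height `y_p`, so `h_{←q}(x, y) ≥ |y - y_q|` and
`h_{→p}(x, y) ≥ |y - y_p|`, with equality as soon as `x ≤ x_q`, resp. `x_p ≤ x`, because then the
vertical foot of `(x, y)` lies on the halfline. Any `x ∈ [x_p, x_q]` therefore attains the lower
bound `max {|y_p - y|, |y_q - y|}` of the infimum defining `δ'_{pq}(y)`. -/

@[simp] lemma pt_zero (x y : ℝ) : pt x y 0 = x := rfl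

@[simp] lemma pt_one (x y : ℝ) : pt x y 1 = y := rfl

lemma pt_apply_zero_one (z : Pt) : pt (z 0) (z 1) = z := by
  ext i
  fin_cases i <;> rfl

lemma dist_pt_pt_same_fst (x y y' : ℝ) : dist (pt x y) (pt x y') = |y - y'| := by
  simp [EuclideanSpace.dist_eq, Fin.sum_univ_two, Real.dist_eq, sq_abs, Real.sqrt_sq_eq_abs]

lemma abs_sub_apply_le_dist (z w : Pt) (i : Fin 2) : |z i - w i| ≤ dist z w :=
  Real.dist_eq (z i) (w i) ▸ PiLp.dist_apply_le z w i

lemma ciInf_eq_of_forall_ge_of_eq {α ι : Type*} [ConditionallyCompleteLattice α] {f : ι → α}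
    {a : α} (hle : ∀ i, a ≤ f i) (i₀ : ι) (hi₀ : f i₀ = a) : ⨅ i, f i = a :=
  have : Nonempty ι := ⟨i₀⟩
  IsGLB.ciInf_eq (IsLeast.isGLB ⟨⟨i₀, hi₀⟩, forall_mem_range.2 hle⟩)

section HorizontalSet

variable {s : Set Pt} {c : ℝ}

lemma abs_sub_le_infDist_of_forall_apply_one_eq (hs : s.Nonempty) (hc : ∀ w ∈ s, w 1 = c)
    (z : Pt) : |z 1 - c| ≤ infDist z s :=
  (le_infDist hs).2 fun w hw => hc w hw ▸ abs_sub_apply_le_dist z w 1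

lemma infDist_pt_eq_of_forall_apply_one_eq (hc : ∀ w ∈ s, w 1 = c) {x : ℝ} (hx : pt x c ∈ s)
    (y : ℝ) : infDist (pt x y) s = |y - c| :=
  le_antisymm (dist_pt_pt_same_fst x y c ▸ infDist_le_dist_of_mem hx)
    (abs_sub_le_infDist_of_forall_apply_one_eq ⟨_, hx⟩ hc (pt x y))

end HorizontalSet

lemma abs_sub_le_hL (q z : Pt) : |z 1 - q 1| ≤ hL q z :=
  abs_sub_le_infDist_of_forall_apply_one_eq (s := leftRay q) ⟨q, rfl, le_rfl⟩
    (fun _ hw => hw.1) z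

lemma abs_sub_le_hR (p z : Pt) : |z 1 - p 1| ≤ hR p z :=
  abs_sub_le_infDist_of_forall_apply_one_eq (s := rightRay p) ⟨p, rfl, le_rfl⟩
    (fun _ hw => hw.1) z

lemma hL_pt_of_le (q : Pt) {x : ℝ} (hx : x ≤ q 0) (y : ℝ) : hL q (pt x y) = |y - q 1| :=
  infDist_pt_eq_of_forall_apply_one_eq (s := leftRay q) (fun _ hw => hw.1) ⟨rfl, hx⟩ y

lemma hR_pt_of_ge (p : Pt) {x : ℝ} (hx : p 0 ≤ x) (y : ℝ) : hR p (pt x y) = |y - p 1| :=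
  infDist_pt_eq_of_forall_apply_one_eq (s := rightRay p) (fun _ hw => hw.1) ⟨rfl, hx⟩ y

lemma delta_self (p : Pt) (y : ℝ) : delta p p y = |p 1 - y| := by
  simp only [delta, max_self, ← dist_eq_norm]
  refine ciInf_eq_of_forall_ge_of_eq (fun x => ?_) (p 0) ?_
  · simpa [abs_sub_comm] using abs_sub_apply_le_dist (pt x y) p 1
  · have := dist_pt_pt_same_fst (p 0) y (p 1)
    rwa [pt_apply_zero_one, abs_sub_comm] at this

lemma delta'_eq_max_abs (p q : Pt) (h : p 0 ≤ q 0) (y : ℝ) :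
    delta' p q y = max |p 1 - y| |q 1 - y| := by
  refine ciInf_eq_of_forall_ge_of_eq (fun x => ?_) (p 0) ?_
  · rw [max_comm, abs_sub_comm (p 1), abs_sub_comm (q 1)]
    exact max_le_max (abs_sub_le_hL q (pt x y)) (abs_sub_le_hR p (pt x y))
  · rw [hL_pt_of_le q h, hR_pt_of_ge p le_rfl, max_comm, abs_sub_comm y, abs_sub_comm y]

theorem stmt_7 (p q : Pt) (h : p 0 < q 0) (y : ℝ) :
    delta' p q y = max |p 1 - y| |q 1 - y| ∧
    delta' p q y = max (delta p p y) (delta q q y) := by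
  have hδ' := delta'_eq_max_abs p q h.le y
  exact ⟨hδ', by rw [hδ', delta_self, delta_self]⟩
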